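/- Let P = (P, ≤, ', 0, 1) be a bounded poset of finite height with a complementation satisfying x'' = x which is weakly orthomodular (x ≤ y implies x ∨ (y ∧ x') exists and equals y). Define x ⊙ y := Min U(x, y') ∧ y (well-defined) and assume x → y := x' ∨ Max L(x, y) is well-defined. Then x ⊙ y ⊑ {z} implies {x} ⊑ y → z, and moreover x ∨ (x → 0) = {1} and x → 0 = {x'} for all x. -/

import Mathlib

/-- Common upper bounds of two elements. -/
def UB {P : Type*} [PartialOrder P] (a b : P) : Set P := {u | a ≤ u ∧ b ≤ u}

/-- Common lower bounds of two elements. -/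
def LB {P : Type*} [PartialOrder P] (a b : P) : Set P := {l | l ≤ a ∧ l ≤ b}

/-- Minimal elements of the set of common upper bounds. -/
def MinU {P : Type*} [PartialOrder P] (a b : P) : Set P :=
  {m | m ∈ UB a b ∧ ∀ x ∈ UB a b, x ≤ m → x = m}

/-- Maximal elements of the set of common lower bounds. -/
def MaxL {P : Type*} [PartialOrder P] (a b : P) : Set P :=
  {m | m ∈ LB a b ∧ ∀ x ∈ LB a b, m ≤ x → x = m}

/-- A poset has finite height if it contains no infinite chain. -/
def FinHeight (P : Type*) [Preorder P] : Prop :=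
  ∀ C : Set P, IsChain (· ≤ ·) C → C.Finite

/-- x ⊙ y := Min U(x, y') ∧ y, elementwise (w is a witness of an existing meet). -/
def odot {P : Type*} [PartialOrder P] (c : P → P) (x y : P) : Set P :=
  {w | ∃ m ∈ MinU x (c y), IsGLB {m, y} w}

/-- x → y := x' ∨ Max L(x, y), elementwise (w is a witness of an existing join). -/
def opImp {P : Type*} [PartialOrder P] (c : P → P) (x y : P) : Set P :=
  {w | ∃ m ∈ MaxL x y, IsLUB {c x, m} w}

/-- The order-like relation ⊑ on subsets. -/
def SubLE {P : Type*} [PartialOrder P] (A B : Set P) : Prop :=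
  ∃ a ∈ A, ∃ b ∈ B, a ≤ b

/-- A ⊙ y := ⋃ x ∈ A, x ⊙ y. -/
def setOdot {P : Type*} [PartialOrder P] (c : P → P) (A : Set P) (y : P) : Set P :=
  ⋃ x ∈ A, odot c x y

/-!
Finite height (via Zorn) puts a maximal element of a set above each of its elements, and dually;
so `Min U(x, y')` and `Max L(y, z)` are nonempty. The key identity is that if `a = m ∧ y` with
`y' ≤ m`, then weak orthomodularity (applied to `y' ≤ m`) gives `m = y' ∨ a`. So if `a ≤ z`,
pick `n ∈ Max L(y, z)` above `a`; then `x ≤ m = y' ∨ a ≤ y' ∨ n ∈ y → z`.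
-/

section MinMax

variable {P : Type*} [PartialOrder P]

theorem mem_MinU_iff {a b m : P} : m ∈ MinU a b ↔ Minimal (· ∈ UB a b) m :=
  ⟨fun h => ⟨h.1, fun _ hy hle => (h.2 _ hy hle).ge⟩,
    fun h => ⟨h.prop, fun _ hy hle => h.eq_of_le hy hle⟩⟩

theorem mem_MaxL_iff {a b m : P} : m ∈ MaxL a b ↔ Maximal (· ∈ LB a b) m :=
  ⟨fun h => ⟨h.1, fun _ hy hle => (h.2 _ hy hle).le⟩,
    fun h => ⟨h.prop, fun _ hy hle => h.eq_of_ge hy hle⟩⟩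

theorem FinHeight.dual (hfin : FinHeight P) : FinHeight Pᵒᵈ :=
  fun C hC => hfin C hC.symm

theorem FinHeight.exists_le_maximal (hfin : FinHeight P) {S : Set P} {a : P} (ha : a ∈ S) :
    ∃ m, a ≤ m ∧ Maximal (· ∈ S) m :=
  zorn_le_nonempty₀ S (fun C hCS hC _ hy => by
    obtain ⟨m, -, hm⟩ := (hfin C hC).exists_le_maximal hy
    exact ⟨m, hCS hm.prop, fun z hz => (hC.total hz hm.prop).elim id (hm.le_of_ge hz)⟩) a ha

theorem FinHeight.exists_minimal_le (hfin : FinHeight P) {S : Set P} {a : P} (ha : a ∈ S) :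
    ∃ m, m ≤ a ∧ Minimal (· ∈ S) m :=
  hfin.dual.exists_le_maximal (S := OrderDual.ofDual ⁻¹' S) ha

end MinMax

section Operations

variable {P : Type*} [PartialOrder P] (c : P → P)

theorem opImp_bot [OrderBot P] (x : P) : opImp c x ⊥ = {c x} := by
  have hMaxL : MaxL x ⊥ = {⊥} :=
    Set.eq_singleton_iff_unique_mem.2
      ⟨⟨⟨bot_le, le_rfl⟩, fun _ hz _ => le_bot_iff.1 hz.2⟩, fun _ hm => le_bot_iff.1 hm.1.2⟩
  have hlub : IsLUB {c x, ⊥} (c x) :=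
    ⟨by rintro _ (rfl | rfl) <;> simp, fun _ h => h (by simp)⟩
  ext w
  simp only [opImp, hMaxL, Set.mem_singleton_iff, exists_eq_left, Set.mem_ofPred_eq]
  exact ⟨fun h => h.unique hlub, fun h => h ▸ hlub⟩

variable {c} (hinv : ∀ x : P, c (c x) = x)
  (hWOM : ∀ x y : P, x ≤ y → ∃ m, IsGLB {y, c x} m ∧ IsLUB {x, m} y)
include hinv hWOM

theorem isLUB_compl_of_isGLB {y m a : P} (hym : c y ≤ m) (ha : IsGLB {m, y} a) :
    IsLUB {c y, a} m := by
  obtain ⟨g, hg, hlub⟩ := hWOM (c y) m hym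
  rw [hinv] at hg
  rwa [hg.unique ha] at hlub

theorem odot_nonempty [OrderTop P] (hfin : FinHeight P) (x y : P) : (odot c x y).Nonempty := by
  obtain ⟨m, -, hm⟩ := hfin.exists_minimal_le (S := UB x (c y)) ⟨le_top, le_top⟩
  obtain ⟨g, hg, -⟩ := hWOM (c y) m hm.prop.2
  rw [hinv] at hg
  exact ⟨g, m, mem_MinU_iff.2 hm, hg⟩

theorem subLE_opImp_of_subLE_odot (hfin : FinHeight P)
    (himp : ∀ x y : P, ∀ m ∈ MaxL x y, ∃ j, IsLUB {c x, m} j) {x y z : P}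
    (h : SubLE (odot c x y) {z}) : SubLE {x} (opImp c y z) := by
  obtain ⟨a, ⟨m, hm, ha⟩, b, hb, hab⟩ := h
  have haz : a ≤ z := Set.mem_singleton_iff.1 hb ▸ hab
  have hm_eq : IsLUB {c y, a} m := isLUB_compl_of_isGLB hinv hWOM hm.1.2 ha
  obtain ⟨n, han, hn⟩ := hfin.exists_le_maximal (S := LB y z) ⟨ha.1 (by simp), haz⟩
  obtain ⟨j, hj⟩ := himp y z n (mem_MaxL_iff.2 hn)
  have hmj : m ≤ j := hm_eq.2 <| by
    rintro u (rfl | rfl)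
    · exact hj.1 (by simp)
    · exact han.trans (hj.1 (by simp))
  exact ⟨x, rfl, j, ⟨n, mem_MaxL_iff.2 hn, hj⟩, hm.1.1.trans hmj⟩

end Operations

theorem stmt18_general {P : Type*} [PartialOrder P] [BoundedOrder P] (c : P → P)
    (hinv : ∀ x : P, c (c x) = x)
    (hsup : ∀ x : P, IsLUB {x, c x} ⊤)
    (hWOM : ∀ x y : P, x ≤ y → ∃ m, IsGLB {y, c x} m ∧ IsLUB {x, m} y)
    (hfin : FinHeight P)
    (himp : ∀ x y : P, ∀ m ∈ MaxL x y, ∃ j, IsLUB {c x, m} j) :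
    (∀ x y : P, (odot c x y).Nonempty) ∧
    (∀ x y z : P, SubLE (odot c x y) {z} → SubLE {x} (opImp c y z)) ∧
    (∀ x : P, {w | ∃ a ∈ opImp c x ⊥, IsLUB {x, a} w} = {(⊤ : P)}) ∧
    (∀ x : P, opImp c x ⊥ = {c x}) := by
  refine ⟨odot_nonempty hinv hWOM hfin,
    fun _ _ _ => subLE_opImp_of_subLE_odot hinv hWOM hfin himp, fun x => ?_, opImp_bot c⟩
  ext w
  simp only [opImp_bot, Set.mem_singleton_iff, exists_eq_left, Set.mem_ofPred_eq]
  exact ⟨fun h => h.unique (hsup x), fun h => h ▸ hsup x⟩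

theorem stmt18 {P : Type*} [PartialOrder P] [BoundedOrder P] (c : P → P)
    (hinv : ∀ x : P, c (c x) = x)
    (hinf : ∀ x : P, IsGLB {x, c x} ⊥)
    (hsup : ∀ x : P, IsLUB {x, c x} ⊤)
    (hWOM : ∀ x y : P, x ≤ y → ∃ m, IsGLB {y, c x} m ∧ IsLUB {x, m} y)
    (hfin : FinHeight P)
    (himp : ∀ x y : P, ∀ m ∈ MaxL x y, ∃ j, IsLUB {c x, m} j) :
    (∀ x y : P, (odot c x y).Nonempty) ∧
    (∀ x y z : P, SubLE (odot c x y) {z} → SubLE {x} (opImp c y z)) ∧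
    (∀ x : P, {w | ∃ a ∈ opImp c x ⊥, IsLUB {x, a} w} = {(⊤ : P)}) ∧
    (∀ x : P, opImp c x ⊥ = {c x}) :=
  stmt18_general c hinv hsup hWOM hfin himp
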